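/- Let r ≥ 2 even and g ≥ 2. The two tuples (0,…,0,0) and (0,…,0,1) in (ℤ/r)^{2g} lie in distinct orbits of the group generated by the transformations Uᵢ, Vᵢ, Wᵢ; in fact A(0,…,0,0) = g mod 2 and A(0,…,0,1) = g+1 mod 2, where A(s₁,t₁,…,s_g,t_g) = ∑ᵢ(sᵢ+1)(tᵢ+1) mod 2. -/
import Mathlib


/-- An `r`-th root, written as a tuple `(s₁,t₁,…,s_g,t_g)` in `(ℤ/r)^{2g}`,
encoded as a function `Fin g → ZMod r × ZMod r`. -/
abbrev RootTuple (r g : ℕ) := Fin g → ZMod r × ZMod r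

/-- One application of a basic Dehn twist `Uᵢ`, `Vᵢ` or `W_{i,i+1}`. -/
def dehnStep (r g : ℕ) (δ δ' : RootTuple r g) : Prop :=
  (∃ i : Fin g, δ' = Function.update δ i ((δ i).1, (δ i).2 - (δ i).1)) ∨
  (∃ i : Fin g, δ' = Function.update δ i ((δ i).1 + (δ i).2, (δ i).2)) ∨
  (∃ (i : Fin g) (hi : (i : ℕ) + 1 < g),
    δ' = Function.update
      (Function.update δ i
        ((δ i).1, (δ i).2 - (δ i).1 + (δ ⟨i + 1, hi⟩).1 - 1))
      ⟨i + 1, hi⟩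
      ((δ ⟨i + 1, hi⟩).1, (δ ⟨i + 1, hi⟩).2 + (δ i).1 - (δ ⟨i + 1, hi⟩).1 + 1))

def atiyahInv (r g : ℕ) (h2 : 2 ∣ r) (δ : RootTuple r g) : ZMod 2 :=
  ∑ i : Fin g,
    (ZMod.castHom h2 (ZMod 2) (δ i).1 + 1) * (ZMod.castHom h2 (ZMod 2) (δ i).2 + 1)

noncomputable def T (r : ℕ) (h2 : 2 ∣ r) (p : ZMod r × ZMod r) : ZMod 2 :=
  (ZMod.castHom h2 (ZMod 2) p.1 + 1) * (ZMod.castHom h2 (ZMod 2) p.2 + 1)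

lemma atiyah_eq (r g : ℕ) (h2 : 2 ∣ r) (δ : RootTuple r g) :
    atiyahInv r g h2 δ = ∑ i, T r h2 (δ i) := rfl

lemma sum_update (r g : ℕ) (h2 : 2 ∣ r) (δ : RootTuple r g) (i : Fin g) (a : ZMod r × ZMod r) :
    ∑ j, T r h2 (Function.update δ i a j)
      = ∑ j, Function.update (fun j => T r h2 (δ j)) i (T r h2 a) j := by
  refine Finset.sum_congr rfl fun j _ => ?_
  exact Function.apply_update (fun _ x => T r h2 x) δ i a j

lemma zmod2_fact1 : ∀ s t : ZMod 2, (s + 1) * (t - s + 1) = (s + 1) * (t + 1) := by decide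
lemma zmod2_fact2 : ∀ s t : ZMod 2, (s + t + 1) * (t + 1) = (s + 1) * (t + 1) := by decide
lemma zmod2_fact3 : ∀ a b c d : ZMod 2,
    (a + 1) * (b - a + c - 1 + 1) + (c + 1) * (d + a - c + 1 + 1)
      = (a + 1) * (b + 1) + (c + 1) * (d + 1) := by decide

set_option maxHeartbeats 1000000 in
lemma dehn_inv (r g : ℕ) (h2 : 2 ∣ r) (δ δ' : RootTuple r g)
    (h : dehnStep r g δ δ') : atiyahInv r g h2 δ' = atiyahInv r g h2 δ := by
  rcases h with ⟨i, rfl⟩ | ⟨i, rfl⟩ | ⟨i, hi, rfl⟩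
  · rw [atiyah_eq, atiyah_eq, sum_update,
        Finset.sum_update_of_mem (Finset.mem_univ i),
        Finset.sum_eq_add_sum_sdiff_singleton_of_mem (Finset.mem_univ i) (fun j => T r h2 (δ j))]
    congr 1
    simp only [T, map_sub]
    exact zmod2_fact1 _ _
  · rw [atiyah_eq, atiyah_eq, sum_update,
        Finset.sum_update_of_mem (Finset.mem_univ i),
        Finset.sum_eq_add_sum_sdiff_singleton_of_mem (Finset.mem_univ i) (fun j => T r h2 (δ j))]
    congr 1
    simp only [T, map_add]
    exact zmod2_fact2 _ _
  · set i' : Fin g := ⟨i + 1, hi⟩ with hi'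
    have hne : i ≠ i' := by
      intro h; apply_fun (Fin.val) at h; simp [hi'] at h
    rw [atiyah_eq, atiyah_eq, sum_update]
    rw [Finset.sum_update_of_mem (Finset.mem_univ i')]
    rw [show (fun j => T r h2 (Function.update δ i
        ((δ i).1, (δ i).2 - (δ i).1 + (δ i').1 - 1) j))
        = Function.update (fun j => T r h2 (δ j)) i
            (T r h2 ((δ i).1, (δ i).2 - (δ i).1 + (δ i').1 - 1)) from
      funext fun j => Function.apply_update (fun _ x => T r h2 x) δ i _ j]
    rw [Finset.sum_eq_add_sum_sdiff_singleton_of_mem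
      (Finset.mem_sdiff.2 ⟨Finset.mem_univ i, by simp [hne]⟩)]
    rw [Function.update_self]
    have hrest : ∀ j ∈ (Finset.univ \ {i'}) \ {i},
        Function.update (fun j => T r h2 (δ j)) i
          (T r h2 ((δ i).1, (δ i).2 - (δ i).1 + (δ i').1 - 1)) j = T r h2 (δ j) := by
      intro j hj
      simp only [Finset.mem_sdiff, Finset.mem_singleton] at hj
      rw [Function.update_of_ne hj.2]
    rw [Finset.sum_congr rfl hrest]
    have hsplit : ∑ j, T r h2 (δ j)
        = T r h2 (δ i') + (T r h2 (δ i) + ∑ j ∈ (Finset.univ \ {i'}) \ {i}, T r h2 (δ j)) := by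
      rw [← Finset.sum_eq_add_sum_sdiff_singleton_of_mem
        (Finset.mem_sdiff.2 ⟨Finset.mem_univ i, by simp [hne]⟩) (fun j => T r h2 (δ j))]
      exact Finset.sum_eq_add_sum_sdiff_singleton_of_mem (Finset.mem_univ i') _
    rw [hsplit, ← add_assoc, ← add_assoc]
    congr 1
    simp only [T, map_sub, map_add, map_one]
    generalize (ZMod.castHom h2 (ZMod 2)) (δ i).1 = a
    generalize (ZMod.castHom h2 (ZMod 2)) (δ i).2 = b
    generalize (ZMod.castHom h2 (ZMod 2)) (δ i').1 = c
    generalize (ZMod.castHom h2 (ZMod 2)) (δ i').2 = d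
    exact (add_comm _ _).trans ((zmod2_fact3 a b c d).trans (add_comm _ _))

/-- For `r` even and `g ≥ 2`, the standard forms `(0,…,0,0)` and `(0,…,0,1)`
have `A`-invariants `g` and `g+1` mod 2 and lie in distinct Dehn twist orbits. -/
theorem standard_forms_distinct (r g : ℕ) (hr : 2 ≤ r) (h2 : 2 ∣ r) (hg : 2 ≤ g) :
    atiyahInv r g h2 (fun _ => (0, 0)) = (g : ZMod 2) ∧
    atiyahInv r g h2
        (Function.update (fun _ => ((0 : ZMod r), (0 : ZMod r)))
          ⟨g - 1, by omega⟩ (0, 1)) = (g : ZMod 2) + 1 ∧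
    ¬ Relation.EqvGen (dehnStep r g) (fun _ => (0, 0))
        (Function.update (fun _ => ((0 : ZMod r), (0 : ZMod r)))
          ⟨g - 1, by omega⟩ (0, 1)) := by
  have h1 : atiyahInv r g h2 (fun _ => (0, 0)) = (g : ZMod 2) := by
    simp [atiyahInv]
  have h2' : ∀ (hh : g - 1 < g), atiyahInv r g h2
      (Function.update (fun _ => ((0 : ZMod r), (0 : ZMod r)))
        ⟨g - 1, hh⟩ (0, 1)) = (g : ZMod 2) + 1 := by
    intro hh
    rw [atiyah_eq, sum_update, Finset.sum_update_of_mem (Finset.mem_univ _)]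
    have hone : ∀ j ∈ Finset.univ \ {(⟨g - 1, hh⟩ : Fin g)},
        T r h2 ((fun _ => ((0:ZMod r), (0:ZMod r))) j) = 1 := by
      intro j _; simp [T]
    rw [Finset.sum_congr rfl hone, Finset.sum_const]
    have hT : T r h2 ((0 : ZMod r), (1 : ZMod r)) = 0 := by
      simp only [T, map_one, map_zero]; decide
    rw [hT, zero_add]
    have hcard : (Finset.univ \ {(⟨g - 1, hh⟩ : Fin g)}).card = g - 1 := by
      simp [Finset.card_sdiff_of_subset]
    rw [hcard, nsmul_eq_mul, mul_one]
    have hc : ((g - 1 : ℕ) : ZMod 2) = (g : ZMod 2) - 1 := by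
      have := Nat.cast_sub (le_trans (by norm_num) hg) (R := ZMod 2) (m := 1) (n := g)
      simpa using this
    rw [hc]
    ring_nf
    rw [show (-1 : ZMod 2) = 1 by decide]
  refine ⟨h1, h2' _, fun h => ?_⟩
  have key : ∀ a b : RootTuple r g, Relation.EqvGen (dehnStep r g) a b →
      atiyahInv r g h2 a = atiyahInv r g h2 b := by
    intro a b hab
    induction hab with
    | rel x y hxy => exact (dehn_inv r g h2 x y hxy).symm
    | refl x => rfl
    | symm x y _ ih => exact ih.symm
    | trans x y z _ _ ih1 ih2 => exact ih1.trans ih2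
  have heq := key _ _ h
  rw [h1, h2' _] at heq
  simpa using heq
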